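/- Let λ be a real number with 1 ≤ λ ≤ m, and let v and v̂ be two unit-sum valuation profiles on n voters and m candidates, both consistent with the same ordinal profile σ. Let a* be a candidate maximizing SW₁(·|v̂), let S_λ = {x : λ·SW₁(x|v̂) ≥ SW₁(a*|v̂)}, and let w ∈ S_λ be a candidate maximizing plu(·) over S_λ. Assume SW₁(w|v) > 0 and SW₁(w|v̂) > 0, and define ρ(w|u) = (max_y SW₁(y|u)) / SW₁(w|u) and η(w) = max{ ρ(w|v)/ρ(w|v̂), 1 }. Then η(w) ≤ max{ m, m²/(λ·ρ(w|v̂)) }. -/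
import Mathlib


open Finset

/-- Social welfare of candidate `x` under valuation profile `v`. -/
noncomputable def SW {n m : ℕ} (v : Fin n → Fin m → ℝ) (x : Fin m) : ℝ := ∑ i, v i x

/-- `v` is a valuation profile with nonnegative values summing to `1` for each voter. -/
def UnitSum {n m : ℕ} (v : Fin n → Fin m → ℝ) : Prop :=
  (∀ i x, 0 ≤ v i x) ∧ ∀ i, ∑ x, v i x = 1

/-- `σ i p` is the candidate ranked at position `p` by voter `i` (position `0` is the top);
`v` is consistent with `σ` if each voter's values are non-increasing along her ranking. -/
def Consistent {n m : ℕ} (σ : Fin n → (Fin m ≃ Fin m)) (v : Fin n → Fin m → ℝ) : Prop :=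
  ∀ i, ∀ p q : Fin m, p ≤ q → v i (σ i q) ≤ v i (σ i p)

/-- `T x`: the set of voters whose top-ranked candidate under `σ` is `x`. -/
def Tset {n m : ℕ} [NeZero m] (σ : Fin n → (Fin m ≃ Fin m)) (x : Fin m) : Finset (Fin n) :=
  Finset.univ.filter (fun i => σ i 0 = x)

/-- The first-place social welfare of `x` under profile `v`. -/
noncomputable def SW1 {n m : ℕ} [NeZero m] (σ : Fin n → (Fin m ≃ Fin m))
    (v : Fin n → Fin m → ℝ) (x : Fin m) : ℝ :=
  ∑ i ∈ Tset σ x, v i x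

/-- The plurality score of `x`. -/
def plu {n m : ℕ} [NeZero m] (σ : Fin n → (Fin m ≃ Fin m)) (x : Fin m) : ℕ :=
  (Tset σ x).card

/-- The maximum first-place social welfare over all candidates. -/
noncomputable def maxSW1 {n m : ℕ} [NeZero m] (σ : Fin n → (Fin m ≃ Fin m))
    (v : Fin n → Fin m → ℝ) : ℝ :=
  Finset.univ.sup' ⟨(0 : Fin m), Finset.mem_univ _⟩ (SW1 σ v)

/-- `ρ(w|u)`: the approximation of the maximum first-place social welfare achieved by `w`
with respect to the profile `u`. -/
noncomputable def rho {n m : ℕ} [NeZero m] (σ : Fin n → (Fin m ≃ Fin m))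
    (u : Fin n → Fin m → ℝ) (w : Fin m) : ℝ :=
  maxSW1 σ u / SW1 σ u w

/-- The prediction error `η(w) = max{ρ(w|v)/ρ(w|v̂), 1}`. -/
noncomputable def eta {n m : ℕ} [NeZero m] (σ : Fin n → (Fin m ≃ Fin m))
    (v vhat : Fin n → Fin m → ℝ) (w : Fin m) : ℝ :=
  max (rho σ v w / rho σ vhat w) 1


lemma SW1_le_plu' {n m : ℕ} [NeZero m] (σ : Fin n → (Fin m ≃ Fin m))
    (u : Fin n → Fin m → ℝ) (hu : UnitSum u) (x : Fin m) :
    SW1 σ u x ≤ (plu σ x : ℝ) := by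
  have h1 : ∀ i ∈ Tset σ x, u i x ≤ 1 := by
    intro i _
    calc u i x ≤ ∑ y, u i y :=
          Finset.single_le_sum (fun y _ => hu.1 i y) (Finset.mem_univ x)
      _ = 1 := hu.2 i
  calc SW1 σ u x ≤ ∑ _i ∈ Tset σ x, (1:ℝ) := Finset.sum_le_sum h1
    _ = (plu σ x : ℝ) := by simp [plu]

lemma plu_le_m_SW1 {n m : ℕ} [NeZero m] (σ : Fin n → (Fin m ≃ Fin m))
    (u : Fin n → Fin m → ℝ) (hu : UnitSum u) (hc : Consistent σ u) (x : Fin m) :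
    (plu σ x : ℝ) ≤ m * SW1 σ u x := by
  have h1 : ∀ i ∈ Tset σ x, (1:ℝ) ≤ m * u i x := by
    intro i hi
    have hix : σ i 0 = x := by simpa [Tset] using hi
    calc (1:ℝ) = ∑ y, u i y := (hu.2 i).symm
      _ = ∑ q, u i (σ i q) := (Equiv.sum_comp (σ i) (u i)).symm
      _ ≤ ∑ _q : Fin m, u i (σ i 0) :=
          Finset.sum_le_sum (fun q _ => hc i 0 q (Fin.zero_le q))
      _ = m * u i (σ i 0) := by simp [mul_comm]
      _ = m * u i x := by rw [hix]
  calc (plu σ x : ℝ) = ∑ _i ∈ Tset σ x, (1:ℝ) := by simp [plu]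
    _ ≤ ∑ i ∈ Tset σ x, m * u i x := Finset.sum_le_sum h1
    _ = m * SW1 σ u x := by rw [SW1, Finset.mul_sum]

/-- Bound on the prediction error: `η(w) ≤ max{m, m²/(λ·ρ(w|v̂))}`. -/
theorem stmt10 {n m : ℕ} [NeZero m] (σ : Fin n → (Fin m ≃ Fin m))
    (v vhat : Fin n → Fin m → ℝ)
    (hv : UnitSum v) (hc : Consistent σ v)
    (hvhat : UnitSum vhat) (hchat : Consistent σ vhat)
    (lam : ℝ) (hlam1 : 1 ≤ lam) (hlam2 : lam ≤ m)
    (astar : Fin m) (hastar : ∀ y, SW1 σ vhat y ≤ SW1 σ vhat astar)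
    (w : Fin m) (hwS : SW1 σ vhat astar ≤ lam * SW1 σ vhat w)
    (hwmax : ∀ x : Fin m, SW1 σ vhat astar ≤ lam * SW1 σ vhat x → plu σ x ≤ plu σ w)
    (hpos : 0 < SW1 σ v w) (hposhat : 0 < SW1 σ vhat w) :
    eta σ v vhat w ≤ max (m : ℝ) ((m : ℝ) ^ 2 / (lam * rho σ vhat w)) := by
  have hm1 : (1:ℝ) ≤ m := by
    exact_mod_cast Nat.one_le_iff_ne_zero.mpr (NeZero.ne m)
  have hlam0 : (0:ℝ) < lam := lt_of_lt_of_le one_pos hlam1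
  set Sv := SW1 σ v w with hSv
  set Sh := SW1 σ vhat w with hSh
  -- argmax b for v
  obtain ⟨b, -, hb⟩ := Finset.exists_mem_eq_sup'
    (⟨(0 : Fin m), Finset.mem_univ _⟩ : (Finset.univ : Finset (Fin m)).Nonempty) (SW1 σ v)
  have hMv : maxSW1 σ v = SW1 σ v b := hb
  have hMh : maxSW1 σ vhat = SW1 σ vhat astar :=
    le_antisymm (Finset.sup'_le _ _ fun y _ => hastar y)
      (Finset.le_sup' _ (Finset.mem_univ astar))
  have hSh_le : Sh ≤ SW1 σ vhat astar := hastar w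
  have hrhohat : rho σ vhat w = SW1 σ vhat astar / Sh := by rw [rho, hMh]
  have hrhohat1 : 1 ≤ rho σ vhat w := by
    rw [hrhohat]; exact (one_le_div hposhat).mpr hSh_le
  have hrhohatpos : 0 < rho σ vhat w := lt_of_lt_of_le one_pos hrhohat1
  have hplu_astar : (plu σ astar : ℝ) ≤ (plu σ w : ℝ) := by
    have h0 : 0 < SW1 σ vhat astar := lt_of_lt_of_le hposhat hSh_le
    have := hwmax astar (le_mul_of_one_le_left h0.le hlam1)
    exact_mod_cast this
  have hpluw : (plu σ w : ℝ) ≤ m * Sv := plu_le_m_SW1 σ v hv hc w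
  have hwb : Sv ≤ SW1 σ v b := by
    rw [hSv, ← hb]; exact Finset.le_sup' _ (Finset.mem_univ w)
  have hMvnn : 0 ≤ SW1 σ v b := le_trans hpos.le hwb
  have hrhov_nn : 0 ≤ rho σ v w := by
    rw [rho, hMv]; exact div_nonneg hMvnn hpos.le
  rw [eta]
  apply max_le
  · -- main case analysis
    by_cases hcase : SW1 σ vhat astar ≤ lam * SW1 σ vhat b
    · -- b ∈ S, so plu b ≤ plu w, rho v ≤ m
      have hplub : (plu σ b : ℝ) ≤ (plu σ w : ℝ) := by exact_mod_cast hwmax b hcase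
      have hrv : rho σ v w ≤ m := by
        rw [rho, hMv, div_le_iff₀ hpos]
        calc SW1 σ v b ≤ (plu σ b : ℝ) := SW1_le_plu' σ v hv b
          _ ≤ (plu σ w : ℝ) := hplub
          _ ≤ m * Sv := hpluw
      calc rho σ v w / rho σ vhat w ≤ rho σ v w := div_le_self hrhov_nn hrhohat1
        _ ≤ m := hrv
        _ ≤ _ := le_max_left _ _
    · -- b ∉ S
      have hlt : lam * SW1 σ vhat b ≤ SW1 σ vhat astar := (not_le.mp hcase).le
      have hkey : lam * SW1 σ v b ≤ (m:ℝ)^2 * Sv := by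
        calc lam * SW1 σ v b ≤ lam * (plu σ b : ℝ) := by
              exact mul_le_mul_of_nonneg_left (SW1_le_plu' σ v hv b) hlam0.le
          _ ≤ lam * (m * SW1 σ vhat b) := by
              exact mul_le_mul_of_nonneg_left (plu_le_m_SW1 σ vhat hvhat hchat b) hlam0.le
          _ = m * (lam * SW1 σ vhat b) := by ring
          _ ≤ m * SW1 σ vhat astar := by
              exact mul_le_mul_of_nonneg_left hlt (le_trans zero_le_one hm1)
          _ ≤ m * (plu σ astar : ℝ) := by
              exact mul_le_mul_of_nonneg_left (SW1_le_plu' σ vhat hvhat astar)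
                (le_trans zero_le_one hm1)
          _ ≤ m * (plu σ w : ℝ) := by
              exact mul_le_mul_of_nonneg_left hplu_astar (le_trans zero_le_one hm1)
          _ ≤ m * (m * Sv) := by
              exact mul_le_mul_of_nonneg_left hpluw (le_trans zero_le_one hm1)
          _ = (m:ℝ)^2 * Sv := by ring
      have hrv : rho σ v w ≤ (m:ℝ)^2 / lam := by
        rw [rho, hMv, div_le_div_iff₀ hpos hlam0]
        linarith [hkey]
      calc rho σ v w / rho σ vhat w ≤ ((m:ℝ)^2 / lam) / rho σ vhat w :=
            div_le_div_of_nonneg_right ?_ hrhohatpos.le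
        _ = (m:ℝ)^2 / (lam * rho σ vhat w) := by rw [div_div]
        _ ≤ _ := le_max_right _ _
      exact hrv
  · exact le_trans hm1 (le_max_left _ _)
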